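/- arXiv:1901.02449 — 5 statements merged into one kernel-verified Lean document; each statement's English description precedes it below -/
import Mathlib

section
/- Let ỹ₁,...,ỹ_N be pairwise distinct real numbers and v ∈ ℝ^N with v₁ + ... + v_N = 0. If ∑_{j,k} |ỹ_j - ỹ_k| v_j v_k = 0, then v = 0. -/
open scoped BigOperators

/-!
Sort the points increasingly, `z₀ < ⋯ < z_{N-1}`. Each distance is then a sum of consecutive
gaps, `|z_j - z_k| = ∑ᵢ (z_{i+1} - z_i) (1[j ≤ i] - 1[k ≤ i])²`, and for a mean-zero `w` one has
`∑_{j,k} (x_j - x_k)² w_j w_k = -2 (∑_j x_j w_j)²`. Hence the quadratic form equals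
`-2 ∑ᵢ (z_{i+1} - z_i) S_i²` with partial sums `S_i = w₀ + ⋯ + w_i`. All gaps are positive, so
the form vanishes only if every `S_i`, and therefore every `w_i`, vanishes.
-/

open Finset

theorem sum_sum_sq_sub_mul_mul_of_sum_eq_zero {ι R : Type*} [CommRing R] (s : Finset ι)
    (x w : ι → R) (hw : ∑ j ∈ s, w j = 0) :
    ∑ j ∈ s, ∑ k ∈ s, (x j - x k) ^ 2 * w j * w k = -2 * (∑ j ∈ s, x j * w j) ^ 2 := by
  have expand : ∀ j k, (x j - x k) ^ 2 * w j * w k =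
      x j ^ 2 * w j * w k - 2 * (x j * w j) * (x k * w k) + w j * (x k ^ 2 * w k) :=
    fun j k => by ring
  simp only [expand, sum_add_distrib, sum_sub_distrib, ← mul_sum, ← sum_mul, hw, mul_zero,
    zero_mul, sum_const_zero]
  ring

theorem sum_range_ite_le_eq_sum_range_succ {M : Type*} [AddCommMonoid M] {N i : ℕ}
    (hi : i < N) (w : ℕ → M) :
    ∑ j ∈ range N, (if j ≤ i then w j else 0) = ∑ j ∈ range (i + 1), w j := by
  rw [← sum_filter]
  congr 1
  ext j
  simp only [mem_filter, mem_range]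
  omega

theorem abs_sub_eq_sum_mul_sq_sub_boole {N : ℕ} {z : ℕ → ℝ} (hz : MonotoneOn z (Set.Iio N))
    {j k : ℕ} (hj : j < N) (hk : k < N) :
    |z j - z k| = ∑ i ∈ range (N - 1),
      (z (i + 1) - z i) * ((if j ≤ i then 1 else 0) - (if k ≤ i then 1 else 0)) ^ 2 := by
  wlog hjk : j ≤ k generalizing j k
  · rw [abs_sub_comm, this hk hj (by omega)]
    exact sum_congr rfl fun i _ => by ring
  calc |z j - z k| = z k - z j := by
        rw [abs_sub_comm, abs_of_nonneg (sub_nonneg.2 (hz hj hk hjk))]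
    _ = ∑ i ∈ Ico j k, (z (i + 1) - z i) := (sum_Ico_sub z hjk).symm
    _ = ∑ i ∈ Ico j k, (z (i + 1) - z i) *
          ((if j ≤ i then 1 else 0) - (if k ≤ i then 1 else 0)) ^ 2 := by
      refine sum_congr rfl fun i hi => ?_
      rw [mem_Ico] at hi
      simp [hi.1, not_le.2 hi.2]
    _ = _ := by
      refine sum_subset (fun i hi => ?_) fun i _ hi => ?_
      · simp only [mem_Ico, mem_range] at hi ⊢; omega
      · rw [mem_Ico, not_and_or, not_le, not_lt] at hi
        rcases hi with hij | hki
        · simp [not_le.2 hij, not_le.2 (hij.trans_le hjk)]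
        · simp [hki, hjk.trans hki]

theorem sum_sum_abs_sub_mul_mul_eq {N : ℕ} {z w : ℕ → ℝ} (hz : MonotoneOn z (Set.Iio N))
    (hw : ∑ j ∈ range N, w j = 0) :
    ∑ j ∈ range N, ∑ k ∈ range N, |z j - z k| * w j * w k =
      -2 * ∑ i ∈ range (N - 1), (z (i + 1) - z i) * (∑ j ∈ range (i + 1), w j) ^ 2 := by
  calc ∑ j ∈ range N, ∑ k ∈ range N, |z j - z k| * w j * w k
      = ∑ j ∈ range N, ∑ k ∈ range N, ∑ i ∈ range (N - 1), (z (i + 1) - z i) *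
          (((if j ≤ i then 1 else 0) - (if k ≤ i then 1 else 0)) ^ 2 * w j * w k) := by
        refine sum_congr rfl fun j hj => sum_congr rfl fun k hk => ?_
        rw [abs_sub_eq_sum_mul_sq_sub_boole hz (mem_range.1 hj) (mem_range.1 hk), sum_mul, sum_mul]
        exact sum_congr rfl fun i _ => by ring
    _ = ∑ i ∈ range (N - 1), (z (i + 1) - z i) * ∑ j ∈ range N, ∑ k ∈ range N,
          ((if j ≤ i then 1 else 0) - (if k ≤ i then 1 else 0)) ^ 2 * w j * w k := by
        simp_rw [mul_sum]
        exact (sum_congr rfl fun j _ => sum_comm).trans sum_comm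
    _ = ∑ i ∈ range (N - 1), (z (i + 1) - z i) * (-2 * (∑ j ∈ range (i + 1), w j) ^ 2) := by
        refine sum_congr rfl fun i hi => ?_
        rw [sum_sum_sq_sub_mul_mul_of_sum_eq_zero _ _ _ hw]
        simp_rw [ite_mul, one_mul, zero_mul]
        rw [sum_range_ite_le_eq_sum_range_succ (by simp at hi; omega)]
    _ = _ := by
        rw [mul_sum]
        exact sum_congr rfl fun i _ => by ring

theorem eq_zero_of_sum_range_succ_eq_zero {M : Type*} [AddCommGroup M] {N : ℕ} {w : ℕ → M}
    (h : ∀ i < N, ∑ j ∈ range (i + 1), w j = 0) : ∀ i < N, w i = 0 := by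
  rintro (_ | i) hi
  · simpa using h 0 hi
  · have hsucc := h (i + 1) hi
    rwa [sum_range_succ, h i (by omega), zero_add] at hsucc

theorem eq_zero_of_sum_sum_abs_sub_mul_mul_eq_zero {N : ℕ} {z w : ℕ → ℝ}
    (hz : StrictMonoOn z (Set.Iio N)) (hw : ∑ j ∈ range N, w j = 0)
    (h : ∑ j ∈ range N, ∑ k ∈ range N, |z j - z k| * w j * w k = 0) :
    ∀ i < N, w i = 0 := by
  rw [sum_sum_abs_sub_mul_mul_eq hz.monotoneOn hw] at h
  have hgap : ∀ i ∈ range (N - 1), 0 < z (i + 1) - z i := fun i hi => by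
    rw [mem_range] at hi
    exact sub_pos.2 (hz (Set.mem_Iio.2 (by omega)) (Set.mem_Iio.2 (by omega)) (by omega))
  have hterms := (sum_eq_zero_iff_of_nonneg fun i hi =>
    mul_nonneg (hgap i hi).le (sq_nonneg _)).1 (by linarith)
  refine eq_zero_of_sum_range_succ_eq_zero fun i hi => ?_
  rcases lt_or_eq_of_le (Nat.le_sub_one_of_lt hi) with hi' | rfl
  · exact pow_eq_zero_iff two_ne_zero |>.1 <|
      (mul_eq_zero.1 (hterms i (mem_range.2 hi'))).resolve_left (hgap i (mem_range.2 hi')).ne'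
  · rwa [Nat.sub_add_cancel (by omega)]

theorem eq_zero_of_strictMono_of_sum_sum_abs_sub_mul_mul_eq_zero {N : ℕ} {y : Fin N → ℝ}
    (hy : StrictMono y) {u : Fin N → ℝ} (hu : ∑ j, u j = 0)
    (h : ∑ j, ∑ k, |y j - y k| * u j * u k = 0) : u = 0 := by
  -- Extend by zero to `ℕ`-indexed sequences, so that the gaps `z (i + 1) - z i` make sense.
  have extend_val : ∀ (f : Fin N → ℝ) (j : Fin N), Function.extend Fin.val f 0 j = f j :=
    fun f => Fin.val_injective.extend_apply f 0
  have hz : StrictMonoOn (Function.extend Fin.val y 0) (Set.Iio N) := by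
    intro a ha b hb hab
    lift a to Fin N using ha
    lift b to Fin N using hb
    rw [extend_val, extend_val]
    exact hy hab
  have key := eq_zero_of_sum_sum_abs_sub_mul_mul_eq_zero hz (w := Function.extend Fin.val u 0)
    (by simpa only [sum_range, extend_val]) (by simpa only [sum_range, extend_val])
  funext j
  simpa only [extend_val, Pi.zero_apply] using key j j.isLt

/-- Strict negativity in dimension one: if `ỹ₁,…,ỹ_N` are pairwise distinct reals and
`v` is mean-zero with `∑_{j,k} |ỹ_j - ỹ_k| v_j v_k = 0`, then `v = 0`. -/
theorem distance_quadratic_form_eq_zero_iff (N : ℕ) (ty : Fin N → ℝ)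
    (hty : Function.Injective ty)
    (v : Fin N → ℝ) (hv : ∑ j, v j = 0)
    (h : ∑ j, ∑ k, |ty j - ty k| * v j * v k = 0) :
    v = 0 := by
  set σ := Tuple.sort ty
  have hsorted : StrictMono (ty ∘ σ) :=
    (Tuple.monotone_sort ty).strictMono_of_injective (hty.comp σ.injective)
  have hvσ : v ∘ σ = 0 := by
    refine eq_zero_of_strictMono_of_sum_sum_abs_sub_mul_mul_eq_zero hsorted
      ((Equiv.sum_comp σ v).trans hv) ?_
    rw [← h]
    exact (sum_congr rfl fun j _ =>
        Equiv.sum_comp σ fun k => |ty (σ j) - ty k| * v (σ j) * v k).trans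
      (Equiv.sum_comp σ fun j => ∑ k, |ty j - ty k| * v j * v k)
  funext j
  simpa using congrFun hvσ (σ.symm j)
end

section
/- Let v ∈ ℝ^N with v₁ + ... + v_N = 0 and let y₁,...,y_N be pairwise distinct points in ℝ³. If ∑_{j,k} |y_j - y_k| v_j v_k = 0, then v = 0. -/
/-!
On the line, for a mean-zero weight `v`, `∑ |a j - a k| v j v k = -2 ∫ F(t)² dt` where
`F(t) = ∑_{a j ≤ t} v j`; so the form is nonpositive, and it vanishes only if `F` vanishes
almost everywhere, hence everywhere (`F` is a right-continuous step function), which forces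
`v = 0` when the `a j` are distinct. In space, averaging `|⟪x, z⟫|` over the unit ball gives
`c ‖x‖` by rotation invariance, so the average of the one-dimensional forms of the
projections `⟪y j, z⟫` is `c` times the spatial form. These one-dimensional forms are all
nonpositive, so if the spatial form vanishes they vanish for almost every `z`; and for almost
every `z` the projections are distinct.
-/

open MeasureTheory Set Filter Topology Finset Metric
open scoped RealInnerProductSpace

lemma sum_sum_sq_sub_mul_mul_of_sq_eq_self {ι : Type*} [Fintype ι] {χ v : ι → ℝ}
    (hχ : ∀ j, χ j ^ 2 = χ j) (hv : ∑ j, v j = 0) :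
    ∑ j, ∑ k, (χ j - χ k) ^ 2 * v j * v k = -2 * (∑ j, v j * χ j) ^ 2 := by
  have hexpand : ∀ j k, (χ j - χ k) ^ 2 * v j * v k
      = v k * (v j * χ j) + v j * (v k * χ k) - 2 * ((v j * χ j) * (v k * χ k)) := fun j k => by
    rw [sub_sq, hχ, hχ]; ring
  simp_rw [hexpand, Finset.sum_sub_distrib, Finset.sum_add_distrib, ← Finset.mul_sum,
    ← Finset.sum_mul, hv, zero_mul, Finset.sum_const_zero]
  ring

section OneDimensional

lemma sq_indicator_Ici_sub_indicator_Ici (a b : ℝ) :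
    (fun t => ((Ici a).indicator (1 : ℝ → ℝ) t - (Ici b).indicator 1 t) ^ 2)
      = (Ico (min a b) (max a b)).indicator 1 := by
  funext t
  by_cases ha : a ≤ t <;> by_cases hb : b ≤ t <;>
    simp [ha, hb, not_le.mp]

lemma integrable_sq_indicator_Ici_sub_indicator_Ici (a b : ℝ) :
    Integrable (fun t => ((Ici a).indicator (1 : ℝ → ℝ) t - (Ici b).indicator 1 t) ^ 2) := by
  rw [sq_indicator_Ici_sub_indicator_Ici, integrable_indicator_iff measurableSet_Ico]
  exact integrableOn_const measure_Ico_lt_top.ne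

lemma integral_sq_indicator_Ici_sub_indicator_Ici (a b : ℝ) :
    ∫ t, ((Ici a).indicator (1 : ℝ → ℝ) t - (Ici b).indicator 1 t) ^ 2 = |a - b| := by
  rw [sq_indicator_Ici_sub_indicator_Ici, integral_indicator_one measurableSet_Ico]
  simp [Real.volume_real_Ico, max_sub_min_eq_abs, abs_sub_comm]

variable {ι : Type*} [Fintype ι] (a : ι → ℝ) {v : ι → ℝ}

noncomputable def partialMass (a v : ι → ℝ) (t : ℝ) : ℝ := ∑ j, v j * (Ici (a j)).indicator 1 t

lemma sum_sum_sq_indicator_Ici_sub_mul_mul (hv : ∑ j, v j = 0) (t : ℝ) :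
    ∑ j, ∑ k, ((Ici (a j)).indicator (1 : ℝ → ℝ) t - (Ici (a k)).indicator 1 t) ^ 2 * v j * v k
      = -2 * partialMass a v t ^ 2 :=
  sum_sum_sq_sub_mul_mul_of_sq_eq_self (fun j => by by_cases h : a j ≤ t <;> simp [h]) hv

lemma integrable_partialMass_sq (hv : ∑ j, v j = 0) :
    Integrable (fun t => partialMass a v t ^ 2) := by
  have hsum : Integrable fun t => ∑ j, ∑ k,
      ((Ici (a j)).indicator (1 : ℝ → ℝ) t - (Ici (a k)).indicator 1 t) ^ 2 * v j * v k :=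
    integrable_finsetSum _ fun j _ => integrable_finsetSum _ fun k _ =>
      ((integrable_sq_indicator_Ici_sub_indicator_Ici _ _).mul_const _).mul_const _
  refine (hsum.const_mul (-1 / 2)).congr (ae_of_all _ fun t => ?_)
  simp only [sum_sum_sq_indicator_Ici_sub_mul_mul a hv]
  ring

lemma sum_sum_abs_sub_mul_mul (hv : ∑ j, v j = 0) :
    ∑ j, ∑ k, |a j - a k| * v j * v k = -2 * ∫ t, partialMass a v t ^ 2 := by
  have hint : ∀ j k, Integrable fun t =>
      ((Ici (a j)).indicator (1 : ℝ → ℝ) t - (Ici (a k)).indicator 1 t) ^ 2 * v j * v k :=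
    fun j k => ((integrable_sq_indicator_Ici_sub_indicator_Ici _ _).mul_const _).mul_const _
  calc ∑ j, ∑ k, |a j - a k| * v j * v k
      = ∑ j, ∑ k, ∫ t,
          ((Ici (a j)).indicator (1 : ℝ → ℝ) t - (Ici (a k)).indicator 1 t) ^ 2 * v j * v k := by
        simp only [integral_mul_const, integral_sq_indicator_Ici_sub_indicator_Ici]
    _ = ∫ t, ∑ j, ∑ k,
          ((Ici (a j)).indicator (1 : ℝ → ℝ) t - (Ici (a k)).indicator 1 t) ^ 2 * v j * v k := by
        rw [integral_finsetSum _ fun j _ => integrable_finsetSum _ fun k _ => hint j k]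
        exact Finset.sum_congr rfl fun j _ =>
          (integral_finsetSum _ fun k _ => hint j k).symm
    _ = -2 * ∫ t, partialMass a v t ^ 2 := by
        simp only [sum_sum_sq_indicator_Ici_sub_mul_mul a hv, integral_const_mul]

lemma sum_sum_abs_sub_mul_mul_nonpos (hv : ∑ j, v j = 0) :
    ∑ j, ∑ k, |a j - a k| * v j * v k ≤ 0 := by
  rw [sum_sum_abs_sub_mul_mul a hv]
  have : 0 ≤ ∫ t, partialMass a v t ^ 2 := integral_nonneg fun t => sq_nonneg _
  linarith

lemma partialMass_ae_eq_zero (hv : ∑ j, v j = 0)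
    (h : ∑ j, ∑ k, |a j - a k| * v j * v k = 0) : ∀ᵐ t, partialMass a v t = 0 := by
  have hzero : ∫ t, partialMass a v t ^ 2 = 0 := by
    rw [sum_sum_abs_sub_mul_mul a hv] at h; linarith
  filter_upwards [(integral_eq_zero_iff_of_nonneg (fun t => sq_nonneg _)
    (integrable_partialMass_sq a hv)).1 hzero] with t ht
  exact pow_eq_zero_iff two_ne_zero |>.1 ht

lemma partialMass_eventually_eq_nhdsGE (t : ℝ) :
    ∀ᶠ s in 𝓝[≥] t, partialMass a v s = partialMass a v t := by
  have : ∀ j, ∀ᶠ s in 𝓝[≥] t, (Ici (a j)).indicator (1 : ℝ → ℝ) s = (Ici (a j)).indicator 1 t := by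
    intro j
    rcases le_or_gt (a j) t with h | h
    · filter_upwards [self_mem_nhdsWithin] with s (hs : t ≤ s)
      simp [h, h.trans hs]
    · filter_upwards [Ico_mem_nhdsGE h] with s hs
      simp [not_le.2 h, not_le.2 hs.2]
  filter_upwards [eventually_all.2 this] with s hs
  simp only [partialMass, hs]

lemma partialMass_eventually_eq_nhdsLT (t : ℝ) :
    ∀ᶠ s in 𝓝[<] t, partialMass a v s = ∑ j, v j * (Ioi (a j)).indicator 1 t := by
  have : ∀ j, ∀ᶠ s in 𝓝[<] t, (Ici (a j)).indicator (1 : ℝ → ℝ) s = (Ioi (a j)).indicator 1 t := by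
    intro j
    rcases lt_or_ge (a j) t with h | h
    · filter_upwards [Ioo_mem_nhdsLT h] with s hs
      simp [h, hs.1.le]
    · filter_upwards [self_mem_nhdsWithin] with s (hs : s < t)
      simp [not_lt.2 h, not_le.2 (hs.trans_le h)]
  filter_upwards [eventually_all.2 this] with s hs
  simp only [partialMass, hs]

lemma partialMass_eq_zero_of_ae_eq_zero (h : ∀ᵐ t, partialMass a v t = 0) (t : ℝ) :
    partialMass a v t = 0 := by
  obtain ⟨δ, hδ, hsub⟩ := mem_nhdsGE_iff_exists_Ico_subset.1 (partialMass_eventually_eq_nhdsGE a t)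
  by_contra hne
  have hnull : volume (Ico t δ) = 0 :=
    measure_mono_null (fun s hs => show partialMass a v s ≠ 0 from (hsub hs).symm ▸ hne)
      (ae_iff.1 h)
  simp only [Real.volume_Ico, ENNReal.ofReal_eq_zero, tsub_le_iff_right, zero_add] at hnull
  exact not_le.2 hδ hnull

lemma eq_zero_of_partialMass_eq_zero (ha : Function.Injective a)
    (h : ∀ t, partialMass a v t = 0) : v = 0 := by
  funext i
  obtain ⟨s, hs⟩ := (partialMass_eventually_eq_nhdsLT a (a i)).exists
  -- the jump of `partialMass` at `a i` is `v i`, as no other point sits there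
  calc v i = partialMass a v (a i) - ∑ j, v j * (Ioi (a j)).indicator 1 (a i) := by
        rw [partialMass, ← Finset.sum_sub_distrib, Finset.sum_eq_single i]
        · simp
        · intro j _ hj
          rcases (ha.ne hj).lt_or_gt with hlt | hgt
          · simp [hlt, hlt.le]
          · simp [not_le.2 hgt, not_lt.2 hgt.le]
        · simp
    _ = 0 := by rw [← hs, h, h, sub_zero]

lemma eq_zero_of_sum_sum_abs_sub_mul_mul_eq_zero_s4 (ha : Function.Injective a)
    (hv : ∑ j, v j = 0) (h : ∑ j, ∑ k, |a j - a k| * v j * v k = 0) : v = 0 :=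
  eq_zero_of_partialMass_eq_zero a ha
    (partialMass_eq_zero_of_ae_eq_zero a (partialMass_ae_eq_zero a hv h))

end OneDimensional

section InnerProductSpace

variable {E : Type*} [NormedAddCommGroup E] [InnerProductSpace ℝ E] [FiniteDimensional ℝ E]
  [MeasurableSpace E] [BorelSpace E]

lemma setIntegral_closedBall_abs_inner_eq_of_norm_eq {u w : E} (h : ‖u‖ = ‖w‖) :
    ∫ z in closedBall (0 : E) 1, |⟪u, z⟫| = ∫ z in closedBall (0 : E) 1, |⟪w, z⟫| := by
  set e : E ≃ₗᵢ[ℝ] E := (ℝ ∙ (w - u))ᗮ.reflection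
  have hew : e w = u := Submodule.reflection_sub h.symm
  have hball : e ⁻¹' closedBall 0 1 = closedBall 0 1 := by
    rw [e.preimage_closedBall, map_zero]
  rw [← e.measurePreserving.setIntegral_preimage_emb e.toHomeomorph.measurableEmbedding, hball]
  simp only [← hew, e.inner_map_map]

lemma exists_setIntegral_closedBall_abs_inner_eq_mul_norm :
    ∃ c, ∀ x : E, ∫ z in closedBall (0 : E) 1, |⟪x, z⟫| = c * ‖x‖ := by
  rcases subsingleton_or_nontrivial E with hE | hE
  · exact ⟨0, fun x => by simp [Subsingleton.elim x 0]⟩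
  obtain ⟨u, hu⟩ := exists_norm_eq E zero_le_one
  refine ⟨∫ z in closedBall (0 : E) 1, |⟪u, z⟫|, fun x => ?_⟩
  rw [setIntegral_closedBall_abs_inner_eq_of_norm_eq (w := ‖x‖ • u) (by simp [norm_smul, hu])]
  simp only [real_inner_smul_left, abs_mul, abs_norm, integral_const_mul]
  ring

lemma ae_inner_ne_zero {x : E} (hx : x ≠ 0) : ∀ᵐ z : E, ⟪x, z⟫ ≠ 0 := by
  have hker : LinearMap.ker (innerₛₗ ℝ x) ≠ ⊤ := fun htop =>
    hx <| inner_self_eq_zero.1 <| LinearMap.mem_ker.1 (htop ▸ Submodule.mem_top)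
  exact measure_mono_null (fun z (hz : ¬⟪x, z⟫ ≠ 0) => LinearMap.mem_ker.2 (not_not.1 hz))
    (Measure.addHaar_submodule volume _ hker)

lemma ae_injective_inner {ι : Type*} [Finite ι] {y : ι → E} (hy : Function.Injective y) :
    ∀ᵐ z : E, Function.Injective fun j => ⟪y j, z⟫ := by
  have : ∀ j k, ∀ᵐ z : E, ⟪y j, z⟫ = ⟪y k, z⟫ → j = k := by
    intro j k
    by_cases hjk : j = k
    · exact ae_of_all _ fun _ _ => hjk
    filter_upwards [ae_inner_ne_zero (sub_ne_zero.2 (hy.ne hjk))] with z hz hjkz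
    exact absurd (by rw [inner_sub_left, hjkz, sub_self]) hz
  filter_upwards [ae_all_iff.2 fun j => ae_all_iff.2 (this j)] with z hz j k
  exact hz j k

variable {ι : Type*} [Fintype ι] {y : ι → E} {v : ι → ℝ}

lemma integrableOn_closedBall_sum_sum_abs_inner_sub_mul_mul :
    IntegrableOn (fun z => ∑ j, ∑ k, |⟪y j, z⟫ - ⟪y k, z⟫| * v j * v k) (closedBall (0 : E) 1) :=
  ContinuousOn.integrableOn_compact (isCompact_closedBall 0 1) (by fun_prop)

lemma setIntegral_closedBall_sum_sum_abs_inner_sub_mul_mul {c : ℝ}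
    (hc : ∀ x : E, ∫ z in closedBall (0 : E) 1, |⟪x, z⟫| = c * ‖x‖) :
    ∫ z in closedBall (0 : E) 1, ∑ j, ∑ k, |⟪y j, z⟫ - ⟪y k, z⟫| * v j * v k
      = c * ∑ j, ∑ k, dist (y j) (y k) * v j * v k := by
  have hint : ∀ j k, IntegrableOn (fun z => |⟪y j, z⟫ - ⟪y k, z⟫| * v j * v k)
      (closedBall (0 : E) 1) := fun j k =>
    ContinuousOn.integrableOn_compact (isCompact_closedBall 0 1) (by fun_prop)
  rw [integral_finsetSum _ fun j _ => integrable_finsetSum _ fun k _ => hint j k, Finset.mul_sum]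
  refine Finset.sum_congr rfl fun j _ => ?_
  rw [integral_finsetSum _ fun k _ => hint j k, Finset.mul_sum]
  simp only [← inner_sub_left, integral_mul_const, hc, dist_eq_norm, mul_assoc]

theorem eq_zero_of_sum_sum_dist_mul_mul_eq_zero (hy : Function.Injective y)
    (hv : ∑ j, v j = 0) (h : ∑ j, ∑ k, dist (y j) (y k) * v j * v k = 0) : v = 0 := by
  obtain ⟨c, hc⟩ := exists_setIntegral_closedBall_abs_inner_eq_mul_norm (E := E)
  set B := closedBall (0 : E) 1
  set g : E → ℝ := fun z => ∑ j, ∑ k, |⟪y j, z⟫ - ⟪y k, z⟫| * v j * v k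
  have hg_nonpos : ∀ z, g z ≤ 0 := fun z => sum_sum_abs_sub_mul_mul_nonpos _ hv
  have hg_integral : ∫ z in B, -g z = 0 := by
    rw [integral_neg, setIntegral_closedBall_sum_sum_abs_inner_sub_mul_mul hc, h, mul_zero,
      neg_zero]
  have hg_ae : ∀ᵐ z ∂volume.restrict B, g z = 0 := by
    filter_upwards [(integral_eq_zero_iff_of_nonneg (fun z => neg_nonneg.2 (hg_nonpos z))
      integrableOn_closedBall_sum_sum_abs_inner_sub_mul_mul.neg).1 hg_integral] with z hz
    simpa using hz
  have : (ae (volume.restrict B)).NeBot := ae_neBot.2 <| by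
    simpa [B] using (measure_closedBall_pos volume (0 : E) one_pos).ne'
  obtain ⟨z, hz, hinj⟩ := (hg_ae.and (ae_restrict_of_ae (ae_injective_inner hy))).exists
  exact eq_zero_of_sum_sum_abs_sub_mul_mul_eq_zero_s4 _ hinj hv hz

end InnerProductSpace

/-- Strict negativity: if `y₁,…,y_N` are pairwise distinct points of `ℝ³` and `v` is a
mean-zero vector with `∑_{j,k} |y_j - y_k| v_j v_k = 0`, then `v = 0`. -/
theorem distance_quadratic_form_eq_zero_iff_three_dim (N : ℕ)
    (y : Fin N → EuclideanSpace ℝ (Fin 3)) (hy : Function.Injective y)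
    (v : Fin N → ℝ) (hv : ∑ j, v j = 0)
    (h : ∑ j, ∑ k, dist (y j) (y k) * v j * v k = 0) :
    v = 0 :=
  eq_zero_of_sum_sum_dist_mul_mul_eq_zero hy hv h
end

section
/- Let A be a closed operator on a Hilbert space H and P a projection such that A + P has a bounded inverse. Then A has a bounded inverse if and only if B := P − P(A+P)^{-1}P has a bounded inverse on PH, and in that case A^{-1} = (A+P)^{-1} + (A+P)^{-1} P (B ↾ PH)^{-1} P (A+P)^{-1}. -/
/-!
The lemma is an identity in the ring of bounded operators. With `q = (a + p)⁻¹`, an inverse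
`s` of `a` satisfies the resolvent identities `q p s = s - q = s p q`, and these say exactly
that `p + p s p` inverts `b = p - p q p` on the corner `p R p`. Conversely, if `c` inverts `b`
there, then `a q = 1 - p q` gives `a q c = b c = p` and symmetrically `c q a = p`, so
`q + q c q` is a two-sided inverse of `a`.
-/

namespace JensenNenciu

variable {R : Type*} [Ring R] {a p q : R}

/-- `c` inverts `b` in the corner ring `p R p`; for operators this is `c = (b ↾ p H)⁻¹`. -/
def IsCornerInv (p b c : R) : Prop := p * c * p = c ∧ b * c = p ∧ c * b = p

theorem mul_eq_one_sub_of_add_mul_eq_one (hq : (a + p) * q = 1) : a * q = 1 - p * q :=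
  eq_sub_of_add_eq (by rw [← add_mul, hq])

theorem mul_eq_one_sub_of_mul_add_eq_one (hq : q * (a + p) = 1) : q * a = 1 - q * p :=
  eq_sub_of_add_eq (by rw [← mul_add, hq])

theorem mul_mul_eq_sub_of_mul_add_eq_one {s : R} (hq : q * (a + p) = 1) (hs : a * s = 1) :
    q * p * s = s - q :=
  calc q * p * s = q * (a + p) * s - q * (a * s) := by noncomm_ring
    _ = s - q := by rw [hq, hs, one_mul, mul_one]

theorem mul_mul_eq_sub_of_add_mul_eq_one {s : R} (hq : (a + p) * q = 1) (hs : s * a = 1) :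
    s * p * q = s - q :=
  calc s * p * q = s * ((a + p) * q) - s * a * q := by noncomm_ring
    _ = s - q := by rw [hq, hs, one_mul, mul_one]

theorem isCornerInv_of_mul_eq_one {s : R} (hp : IsIdempotentElem p) (hq₁ : (a + p) * q = 1)
    (hq₂ : q * (a + p) = 1) (hs₁ : a * s = 1) (hs₂ : s * a = 1) :
    IsCornerInv p (p - p * q * p) (p + p * s * p) := by
  have hpp (x : R) : p * (p * x) = p * x := by rw [← mul_assoc, hp.eq]
  have hqps (x : R) : q * (p * (s * x)) = s * x - q * x := by
    rw [← mul_assoc, ← mul_assoc, mul_mul_eq_sub_of_mul_add_eq_one hq₂ hs₁, sub_mul]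
  have hspq (x : R) : s * (p * (q * x)) = s * x - q * x := by
    rw [← mul_assoc, ← mul_assoc, mul_mul_eq_sub_of_add_mul_eq_one hq₁ hs₂, sub_mul]
  refine ⟨?_, ?_, ?_⟩ <;>
    simp only [sub_mul, add_mul, mul_add, mul_sub, mul_assoc, hp.eq, hpp, hqps, hspq] <;> abel

theorem mul_eq_one_of_isCornerInv {c : R} (hp : IsIdempotentElem p) (hq₁ : (a + p) * q = 1)
    (hq₂ : q * (a + p) = 1) (hc : IsCornerInv p (p - p * q * p) c) :
    a * (q + q * c * q) = 1 ∧ (q + q * c * q) * a = 1 := by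
  obtain ⟨hpcp, hbc, hcb⟩ := hc
  have hpc : p * c = c := by rw [← hpcp, ← mul_assoc, ← mul_assoc, hp.eq]
  have hcp : c * p = c := by rw [← hpcp, mul_assoc, hp.eq]
  have haqc : a * q * c = p :=
    calc a * q * c = (1 - p * q) * (p * c) := by rw [mul_eq_one_sub_of_add_mul_eq_one hq₁, hpc]
      _ = (p - p * q * p) * c := by noncomm_ring
      _ = p := hbc
  have hcqa : c * (q * a) = p :=
    calc c * (q * a) = c * p * (1 - q * p) := by rw [mul_eq_one_sub_of_mul_add_eq_one hq₂, hcp]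
      _ = c * (p - p * q * p) := by noncomm_ring
      _ = p := hcb
  constructor
  · calc a * (q + q * c * q) = a * q + a * q * c * q := by noncomm_ring
      _ = 1 := by rw [haqc, mul_eq_one_sub_of_add_mul_eq_one hq₁, sub_add_cancel]
  · calc (q + q * c * q) * a = q * a + q * (c * (q * a)) := by noncomm_ring
      _ = 1 := by rw [hcqa, mul_eq_one_sub_of_mul_add_eq_one hq₂, sub_add_cancel]

end JensenNenciu

open JensenNenciu

theorem jensen_nenciu_general {H : Type*} [NormedAddCommGroup H] [InnerProductSpace ℂ H]
    (A P Q : H →L[ℂ] H)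
    (hP : P ∘L P = P)
    (hQ1 : (A + P) ∘L Q = 1) (hQ2 : Q ∘L (A + P) = 1) :
    ((∃ R : H →L[ℂ] H, A ∘L R = 1 ∧ R ∘L A = 1) ↔
      (∃ C : H →L[ℂ] H, P ∘L C ∘L P = C ∧
        (P - P ∘L Q ∘L P) ∘L C = P ∧ C ∘L (P - P ∘L Q ∘L P) = P)) ∧
    (∀ C : H →L[ℂ] H, P ∘L C ∘L P = C →
      (P - P ∘L Q ∘L P) ∘L C = P → C ∘L (P - P ∘L Q ∘L P) = P →
      ∀ R : H →L[ℂ] H, A ∘L R = 1 → R ∘L A = 1 →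
        R = Q + Q ∘L C ∘L Q) := by
  simp only [← ContinuousLinearMap.mul_def, ← mul_assoc] at hP hQ1 hQ2 ⊢
  refine ⟨⟨fun ⟨S, hS₁, hS₂⟩ => ⟨_, isCornerInv_of_mul_eq_one hP hQ1 hQ2 hS₁ hS₂⟩,
      fun ⟨C, hC⟩ => ⟨_, mul_eq_one_of_isCornerInv hP hQ1 hQ2 hC⟩⟩, ?_⟩
  intro C hPCP hBC hCB R _ hRA
  exact left_inv_eq_right_inv hRA (mul_eq_one_of_isCornerInv hP hQ1 hQ2 ⟨hPCP, hBC, hCB⟩).1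

/-- Jensen–Nenciu lemma. Let `A` be a (bounded, hence closed) operator on a Hilbert
space `H` and `P` a projection such that `A + P` has a bounded inverse `Q`.  Then `A`
has a bounded inverse if and only if `B := P - P Q P` has a bounded inverse on the
subspace `P H` (expressed by an operator `C` with `C = P C P`, `B C = P = C B`), and in
that case `A⁻¹ = Q + Q C Q` (`= (A+P)⁻¹ + (A+P)⁻¹ P (B ↾ PH)⁻¹ P (A+P)⁻¹`). -/
theorem jensen_nenciu {H : Type*} [NormedAddCommGroup H] [InnerProductSpace ℂ H]
    [CompleteSpace H] (A P Q : H →L[ℂ] H)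
    (hP : P ∘L P = P)
    (hQ1 : (A + P) ∘L Q = 1) (hQ2 : Q ∘L (A + P) = 1) :
    ((∃ R : H →L[ℂ] H, A ∘L R = 1 ∧ R ∘L A = 1) ↔
      (∃ C : H →L[ℂ] H, P ∘L C ∘L P = C ∧
        (P - P ∘L Q ∘L P) ∘L C = P ∧ C ∘L (P - P ∘L Q ∘L P) = P)) ∧
    (∀ C : H →L[ℂ] H, P ∘L C ∘L P = C →
      (P - P ∘L Q ∘L P) ∘L C = P → C ∘L (P - P ∘L Q ∘L P) = P →
      ∀ R : H →L[ℂ] H, A ∘L R = 1 → R ∘L A = 1 →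
        R = Q + Q ∘L C ∘L Q) :=
  jensen_nenciu_general A P Q hP hQ1 hQ2
end

section
/- Let y₁,...,y_N be distinct points in ℝ³ and c ∈ ℂ^N. The function ψ(x) = ∑_{j=1}^N c_j e^{0}/(4π|x − y_j|) = ∑_j c_j/(4π|x − y_j|) belongs to L²(ℝ³) if and only if c₁ + ... + c_N = 0 (or c = 0). -/
/-!
Writing `G_p(x) = |x - p|⁻¹` and using the origin as a reference pole,
`∑ c_j G_{y_j} = ∑ c_j (G_{y_j} - G_0) + (∑ c_j) G_0`. Each difference `G_a - G_b` is in `L²`: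
near the poles because `|x|⁻²` is locally integrable in dimension `d > 2`, and away from them
because `|G_a - G_b| ≤ |a - b| / (|x - a| |x - b|) = O((1 + |x|)⁻²)` and `(1 + |x|)⁻⁴` is
integrable in dimension `d < 4`. On the other hand `G_0 ∉ L²`, since in polar coordinates
`∫ |x|⁻² dx = ∫ r^(d-3) dr` over `(0, ∞)` diverges. Hence `ψ ∈ L²` iff `(∑ c_j) G_0 ∈ L²`.
-/

open MeasureTheory Metric Module

lemma one_add_norm_le_mul_dist {E : Type*} [SeminormedAddCommGroup E] {x a : E}
    (h : 1 ≤ dist x a) : 1 + ‖x‖ ≤ (2 + ‖a‖) * dist x a := by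
  have : ‖x‖ ≤ ‖a‖ + dist x a := by
    rw [dist_eq_norm]; exact norm_le_norm_add_norm_sub' x a
  nlinarith [norm_nonneg a]

lemma abs_inv_dist_sub_inv_dist_le {E : Type*} [SeminormedAddCommGroup E] {x a b : E}
    (ha : 1 ≤ dist x a) (hb : 1 ≤ dist x b) :
    |(dist x a)⁻¹ - (dist x b)⁻¹| ≤ dist a b * ((2 + ‖a‖) * (2 + ‖b‖)) * ((1 + ‖x‖) ^ 2)⁻¹ := by
  have hpa : 0 < dist x a := by linarith
  have hpb : 0 < dist x b := by linarith
  have hsq : (1 + ‖x‖) ^ 2 ≤ (2 + ‖a‖) * (2 + ‖b‖) * (dist x a * dist x b) := by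
    have := mul_le_mul (one_add_norm_le_mul_dist ha) (one_add_norm_le_mul_dist hb)
      (by positivity) (by positivity)
    nlinarith
  calc |(dist x a)⁻¹ - (dist x b)⁻¹| = |dist x b - dist x a| / (dist x a * dist x b) := by
        rw [inv_sub_inv hpa.ne' hpb.ne', abs_div, abs_of_pos (mul_pos hpa hpb)]
    _ ≤ dist a b / (dist x a * dist x b) := by
        gcongr
        rw [dist_comm x a, dist_comm x b, dist_comm a b]
        exact abs_dist_sub_le b a x
    _ ≤ _ := by
        rw [div_le_iff₀ (by positivity), mul_assoc, mul_assoc]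
        refine le_mul_of_one_le_right dist_nonneg ?_
        rw [← mul_assoc, mul_right_comm, ← div_eq_mul_inv, one_le_div (by positivity)]
        exact hsq

section HaarMeasure

variable {E : Type*} [NormedAddCommGroup E] [NormedSpace ℝ E] [FiniteDimensional ℝ E]
  [MeasurableSpace E] [BorelSpace E] (μ : Measure E) [μ.IsAddHaarMeasure]

lemma integrableOn_ball_inv_dist_sq (hd : 2 < finrank ℝ E) (p : E) (r : ℝ) :
    IntegrableOn (fun x => (dist x p)⁻¹ ^ 2) (ball p r) μ := by
  have h0 : IntegrableOn (fun x : E => ‖x‖⁻¹ ^ 2) (ball 0 r) μ := by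
    refine integrableOn_ball_of_norm_le_rpow (C := 1) (α := 2) (by omega) (by exact_mod_cast hd)
      (.of_forall fun x => ?_) (by fun_prop)
    rw [norm_pow, norm_inv, norm_norm, one_mul, Real.rpow_neg (norm_nonneg x), inv_pow]
    norm_cast
  rw [← (measurePreserving_add_left μ p).integrableOn_comp_preimage
    (measurableEmbedding_addLeft p), preimage_add_ball, sub_self]
  simpa [Function.comp_def] using h0

lemma memLp_two_inv_dist_restrict (hd : 2 < finrank ℝ E) (p : E) {s : Set E}
    (hs : Bornology.IsBounded s) : MemLp (fun x => (dist x p)⁻¹) 2 (μ.restrict s) := by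
  obtain ⟨r, hr⟩ := hs.subset_ball p
  refine (memLp_two_iff_integrable_sq_norm (by fun_prop)).2 ?_
  simpa [IntegrableOn] using (integrableOn_ball_inv_dist_sq μ hd p r).mono_set hr

lemma not_integrable_inv_norm_sq [Nontrivial E] : ¬ Integrable (fun x : E => ‖x‖⁻¹ ^ 2) μ := by
  rw [integrable_fun_norm_addHaar μ (f := fun y => y⁻¹ ^ 2)]
  intro h
  refine not_integrableOn_Ioi_rpow ((finrank ℝ E : ℝ) - 3)
    (h.congr_fun (fun y (hy : 0 < y) => ?_) measurableSet_Ioi)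
  have : 1 ≤ finrank ℝ E := finrank_pos
  simp only [smul_eq_mul]
  rw [← Real.rpow_natCast, ← Real.rpow_natCast, ← Real.rpow_neg_one, ← Real.rpow_mul hy.le,
    ← Real.rpow_add hy]
  push_cast [this]
  ring_nf

lemma not_memLp_two_inv_dist [Nontrivial E] (p : E) : ¬ MemLp (fun x => (dist x p)⁻¹) 2 μ := by
  intro h
  have := ((memLp_two_iff_integrable_sq_norm (by fun_prop)).1 h).comp_add_right p
  exact not_integrable_inv_norm_sq μ (by simpa [dist_eq_norm] using this)

lemma memLp_two_one_add_norm_sq_inv (hd : finrank ℝ E < 4) :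
    MemLp (fun x : E => ((1 + ‖x‖) ^ 2)⁻¹) 2 μ := by
  refine (memLp_two_iff_integrable_sq_norm (by fun_prop)).2 ?_
  refine (integrable_one_add_norm (μ := μ) (r := 4) (by exact_mod_cast hd)).congr
    (.of_forall fun x => ?_)
  have : 0 < 1 + ‖x‖ := by positivity
  dsimp only
  rw [Real.rpow_neg this.le, norm_inv, norm_pow, Real.norm_of_nonneg this.le]
  norm_cast
  rw [inv_pow, ← pow_mul]

theorem memLp_two_inv_dist_sub_inv_dist (hd : finrank ℝ E = 3) (a b : E) :
    MemLp (fun x => (dist x a)⁻¹ - (dist x b)⁻¹) 2 μ := by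
  set K := ball a 1 ∪ ball b 1
  have hK : MeasurableSet K := measurableSet_ball.union measurableSet_ball
  have hKb : Bornology.IsBounded K := isBounded_ball.union isBounded_ball
  rw [← K.indicator_self_add_compl (fun x => (dist x a)⁻¹ - (dist x b)⁻¹)]
  refine .add ((memLp_indicator_iff_restrict hK).2 ?_)
    ((memLp_indicator_iff_restrict hK.compl).2 ?_)
  · exact (memLp_two_inv_dist_restrict μ (by omega) a hKb).sub
      (memLp_two_inv_dist_restrict μ (by omega) b hKb)
  · refine (((memLp_two_one_add_norm_sq_inv μ (by omega)).restrict Kᶜ).const_mul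
      (dist a b * ((2 + ‖a‖) * (2 + ‖b‖)))).of_le (by fun_prop)
      (ae_restrict_of_forall_mem hK.compl fun x hx => ?_)
    simp only [K, Set.mem_compl_iff, Set.mem_union, mem_ball, not_or, not_lt] at hx
    rw [Real.norm_eq_abs, Real.norm_of_nonneg (by positivity)]
    exact abs_inv_dist_sub_inv_dist_le hx.1 hx.2

end HaarMeasure

theorem memLp_sum_smul_iff_sum_eq_zero {α ι 𝕜 F : Type*} [MeasurableSpace α] {μ : Measure α}
    {p : ENNReal} [NormedField 𝕜] [NormedAddCommGroup F] [NormedSpace 𝕜 F] [Fintype ι]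
    {g : ι → α → F} {h : α → F} (hg : ∀ i, MemLp (g i - h) p μ) (hh : ¬ MemLp h p μ)
    (c : ι → 𝕜) : MemLp (∑ i, c i • g i) p μ ↔ ∑ i, c i = 0 := by
  have hdec : ∑ i, c i • g i = ∑ i, c i • (g i - h) + (∑ i, c i) • h := by
    simp only [smul_sub, Finset.sum_sub_distrib, Finset.sum_smul, sub_add_cancel]
  have hrest : MemLp (∑ i, c i • (g i - h)) p μ :=
    memLp_finsetSum' _ fun i _ => (hg i).const_smul _
  rw [hdec]
  constructor
  · intro hsum
    by_contra hc
    have := (hsum.sub hrest).const_smul (∑ i, c i)⁻¹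
    rw [add_sub_cancel_left, smul_smul, inv_mul_cancel₀ hc, one_smul] at this
    exact hh this
  · intro hc
    rw [hc, zero_smul, add_zero]
    exact hrest

theorem greens_combination_memL2_iff_general (N : ℕ)
    (y : Fin N → EuclideanSpace ℝ (Fin 3))
    (c : Fin N → ℂ) :
    MemLp (fun x : EuclideanSpace ℝ (Fin 3) =>
        ∑ j, c j / ((4 * Real.pi * dist x (y j) : ℝ) : ℂ)) 2 volume
      ↔ ∑ j, c j = 0 := by
  set g : EuclideanSpace ℝ (Fin 3) → EuclideanSpace ℝ (Fin 3) → ℂ :=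
    fun p x => (((dist x p)⁻¹ : ℝ) : ℂ)
  have hψ : (fun x : EuclideanSpace ℝ (Fin 3) =>
      ∑ j, c j / ((4 * Real.pi * dist x (y j) : ℝ) : ℂ))
      = ∑ j, (c j / (4 * Real.pi : ℂ)) • g (y j) := by
    ext x
    simp only [g, Finset.sum_apply, Pi.smul_apply, smul_eq_mul]
    refine Finset.sum_congr rfl fun j _ => ?_
    push_cast
    ring
  have hdiff (j : Fin N) : MemLp (g (y j) - g 0) 2 volume := by
    simpa [g, Pi.sub_def] using
      (memLp_two_inv_dist_sub_inv_dist volume finrank_euclideanSpace_fin (y j) 0).ofReal (K := ℂ)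
  have hnot : ¬ MemLp (g 0) 2 volume := fun h =>
    not_memLp_two_inv_dist volume (0 : EuclideanSpace ℝ (Fin 3)) (by simpa [g] using h.re)
  have h4π : (4 * Real.pi : ℂ) ≠ 0 := by exact_mod_cast (by positivity : 4 * Real.pi ≠ 0)
  rw [hψ, memLp_sum_smul_iff_sum_eq_zero hdiff hnot, ← Finset.sum_div, div_eq_zero_iff,
    or_iff_left h4π]

/-- For distinct points `y₁,…,y_N ∈ ℝ³` and coefficients `c ∈ ℂ^N` (not all trivially
constrained), the function `ψ(x) = ∑_j c_j / (4π |x - y_j|)` belongs to `L²(ℝ³)` if and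
only if `c₁ + ⋯ + c_N = 0`. -/
theorem greens_combination_memL2_iff (N : ℕ) (hN : 1 ≤ N)
    (y : Fin N → EuclideanSpace ℝ (Fin 3)) (hy : Function.Injective y)
    (c : Fin N → ℂ) :
    MemLp (fun x : EuclideanSpace ℝ (Fin 3) =>
        ∑ j, c j / ((4 * Real.pi * dist x (y j) : ℝ) : ℂ)) 2 volume
      ↔ ∑ j, c j = 0 :=
  greens_combination_memL2_iff_general N y c
end

section
/- Let y₁, y₂, y₃ ∈ ℝ³ be the vertices of an equilateral triangle of side-length 1 and α₁ = α₂ = α₃ = −(4π)^{-1}. Then Ker Γ₀ ∩ Ker Γ₁ (with Γ₀, Γ₁ as for N = 3 point interactions) has dimension 2, i.e. the zero eigenvalue of −Δ_{α,Y} has multiplicity 2. -/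
open Matrix

/-! With unit side lengths and `α_j = -(4π)⁻¹`, every entry of `Γ₀` equals `-(4π)⁻¹`, just as
every entry of `Γ₁` equals `(4πi)⁻¹`. A matrix whose entries all equal one nonzero constant has
the hyperplane `c₁ + c₂ + c₃ = 0` as kernel, so both kernels are this plane, of dimension 2. -/

section ConstantMatrix

variable {K n : Type*} [Fintype n]

def coordSum (K n : Type*) [Semiring K] [Fintype n] : (n → K) →ₗ[K] K :=
  ∑ i, LinearMap.proj i

theorem coordSum_apply [Semiring K] (v : n → K) : coordSum K n v = ∑ i, v i := by
  simp [coordSum]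

theorem coordSum_surjective [Semiring K] [Nonempty n] : Function.Surjective (coordSum K n) := by
  classical
  intro c
  exact ⟨Pi.single (Classical.arbitrary n) c, by simp [coordSum_apply]⟩

theorem finrank_ker_coordSum [DivisionRing K] [Nonempty n] :
    Module.finrank K (LinearMap.ker (coordSum K n)) = Fintype.card n - 1 := by
  have h := LinearMap.finrank_range_add_finrank_ker (coordSum K n)
  rw [LinearMap.range_eq_top.mpr coordSum_surjective, finrank_top, Module.finrank_self,
    Module.finrank_fintype_fun_eq_card] at h
  omega

theorem mulVec_of_forall_eq_const [Semiring K] {A : Matrix n n K} {c : K}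
    (hA : ∀ i j, A i j = c) (v : n → K) : A *ᵥ v = fun _ => c * coordSum K n v := by
  ext i
  simp [mulVec, dotProduct, hA, coordSum_apply, Finset.mul_sum]

theorem ker_mulVecLin_of_forall_eq_const [CommSemiring K] [NoZeroDivisors K] [Nonempty n]
    {A : Matrix n n K} {c : K} (hA : ∀ i j, A i j = c) (hc : c ≠ 0) :
    LinearMap.ker A.mulVecLin = LinearMap.ker (coordSum K n) := by
  ext v
  simp only [LinearMap.mem_ker, mulVecLin_apply, mulVec_of_forall_eq_const hA, funext_iff,
    Pi.zero_apply, mul_eq_zero, hc, false_or, forall_const]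

end ConstantMatrix

/-- Equilateral triangle of side 1 with `α₁ = α₂ = α₃ = -(4π)⁻¹`: the intersection
`Ker Γ₀ ∩ Ker Γ₁` has dimension 2, i.e. the zero eigenvalue has multiplicity 2. -/
theorem equilateral_triangle_zero_eigenvalue_multiplicity
    (y : Fin 3 → EuclideanSpace ℝ (Fin 3))
    (hy : ∀ j k, j ≠ k → dist (y j) (y k) = 1)
    (α : Fin 3 → ℝ) (hα : ∀ j, α j = -(4 * Real.pi)⁻¹)
    (Γ₀ Γ₁ : Matrix (Fin 3) (Fin 3) ℂ)
    (hΓ₀ : ∀ j k, Γ₀ j k = if j = k then (α j : ℂ)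
      else -((4 * Real.pi * dist (y j) (y k) : ℝ) : ℂ)⁻¹)
    (hΓ₁ : ∀ j k, Γ₁ j k = (4 * Real.pi * Complex.I)⁻¹) :
    Module.finrank ℂ
      ↥(LinearMap.ker Γ₀.mulVecLin ⊓ LinearMap.ker Γ₁.mulVecLin) = 2 := by
  have hπ : (Real.pi : ℂ) ≠ 0 := by exact_mod_cast Real.pi_ne_zero
  have hΓ₀_const : ∀ j k, Γ₀ j k = -(4 * Real.pi : ℂ)⁻¹ := by
    intro j k
    by_cases hjk : j = k
    · rw [hΓ₀, if_pos hjk, hα]; push_cast; ring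
    · rw [hΓ₀, if_neg hjk, hy j k hjk]; push_cast; ring
  rw [ker_mulVecLin_of_forall_eq_const hΓ₀_const (by simp [hπ]),
    ker_mulVecLin_of_forall_eq_const hΓ₁ (by simp [hπ, Complex.I_ne_zero]), inf_idem,
    finrank_ker_coordSum, Fintype.card_fin]
end
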